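/- Gegenbauer coefficients of the stereographic kernel (odd order): for integers k ≥ 0 and q ≥ 3, the coefficient b_{2k+1,q} := c_{2k+1,q}^{−1} ∫_{−1}^{1} cot(arccos(x)/2) C_{2k+1}^{(q−1)/2}(x)(1−x²)^{q/2−1} dx equals α_{k,q}(2k+1)(4k+q+1)/(2k+q), where α_{k,q} = Γ(k+1/2)² Γ((q−1)/2)²/(2π Γ(k+q/2)²) and c_{k,q} = (ω_q/ω_{q−1})(1+2k/(q−1))^{−1} C_k^{(q−1)/2}(1). -/

import Mathlib

/-!
With `λ = (q - 1) / 2`, the half-angle formula turns `cot (arccos x / 2) (1 - x²)^(q/2 - 1)` into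
the Jacobi weight `(1 + x)^λ (1 - x)^(λ - 1)`, so the integral is the moment
`I_n = gegenbauerMoment λ λ (λ - 1) n` at `n = 2k + 1`. The three-term recurrence, and an
integration by parts against `(1 + x)^(λ + 1) (1 - x)^λ C_{n+1}^λ`, relate `I_n`, `I_{n+1}`,
`I_{n+2}` and `J_n = gegenbauerMoment λ λ λ n`, which vanishes for odd `n` by parity. What is
left are first-order recurrences for `I_n`; compared with
`(n + 1) C_{n+1}^λ(1) = (n + 2λ) C_n^λ(1)` and started from the beta integral `I_0`, they give
`I_{2k+1} / C_{2k+1}^λ(1)` as a ratio of Gamma values, against which the normalisation cancels.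
-/

/-- Surface area of the unit sphere `S^q`. -/
noncomputable def sphereArea (q : ℝ) : ℝ :=
  2 * Real.pi ^ ((q + 1) / 2) / Real.Gamma ((q + 1) / 2)

/-- Gegenbauer (ultraspherical) polynomials `C_n^{lam}` via the standard recurrence. -/
noncomputable def gegenbauer (lam : ℝ) : ℕ → ℝ → ℝ
  | 0 => fun _ => 1
  | 1 => fun x => 2 * lam * x
  | (n + 2) => fun x =>
      (2 * ((n : ℝ) + 1 + lam) * x * gegenbauer lam (n + 1) x
        - ((n : ℝ) + 2 * lam) * gegenbauer lam n x) / ((n : ℝ) + 2)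

open Real Set MeasureTheory

lemma gegenbauer_add_two (lam : ℝ) (n : ℕ) (x : ℝ) :
    ((n : ℝ) + 2) * gegenbauer lam (n + 2) x =
      2 * ((n : ℝ) + 1 + lam) * x * gegenbauer lam (n + 1) x
        - ((n : ℝ) + 2 * lam) * gegenbauer lam n x := by
  rw [gegenbauer]
  field_simp

lemma gegenbauer_neg (lam : ℝ) (n : ℕ) (x : ℝ) :
    gegenbauer lam n (-x) = (-1) ^ n * gegenbauer lam n x := by
  induction n using Nat.twoStepInduction with
  | zero => simp [gegenbauer]
  | one => simp [gegenbauer]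
  | more n ih₁ ih₂ =>
    simp only [gegenbauer, ih₁, ih₂]
    ring

lemma continuous_gegenbauer (lam : ℝ) (n : ℕ) : Continuous (gegenbauer lam n) := by
  induction n using Nat.twoStepInduction with
  | zero => exact continuous_const
  | one => exact continuous_const.mul continuous_id
  | more n ih₁ ih₂ =>
    simp only [gegenbauer]
    fun_prop

noncomputable def gegenbauerDeriv (lam : ℝ) : ℕ → ℝ → ℝ
  | 0 => fun _ => 0
  | 1 => fun _ => 2 * lam
  | (n + 2) => fun x =>
      (2 * ((n : ℝ) + 1 + lam) * (gegenbauer lam (n + 1) x + x * gegenbauerDeriv lam (n + 1) x)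
        - ((n : ℝ) + 2 * lam) * gegenbauerDeriv lam n x) / ((n : ℝ) + 2)

lemma gegenbauerDeriv_add_two (lam : ℝ) (n : ℕ) (x : ℝ) :
    ((n : ℝ) + 2) * gegenbauerDeriv lam (n + 2) x =
      2 * ((n : ℝ) + 1 + lam) * (gegenbauer lam (n + 1) x + x * gegenbauerDeriv lam (n + 1) x)
        - ((n : ℝ) + 2 * lam) * gegenbauerDeriv lam n x := by
  rw [gegenbauerDeriv]
  field_simp

lemma hasDerivAt_gegenbauer (lam : ℝ) (n : ℕ) (x : ℝ) :
    HasDerivAt (gegenbauer lam n) (gegenbauerDeriv lam n x) x := by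
  induction n using Nat.twoStepInduction generalizing x with
  | zero => exact hasDerivAt_const x _
  | one =>
    exact ((hasDerivAt_id x).const_mul (2 * lam)).congr_deriv (by simp [gegenbauerDeriv])
  | more n ih₁ ih₂ =>
    show HasDerivAt (fun y => (2 * ((n : ℝ) + 1 + lam) * y * gegenbauer lam (n + 1) y
        - ((n : ℝ) + 2 * lam) * gegenbauer lam n y) / ((n : ℝ) + 2)) _ x
    refine (((((hasDerivAt_id x).const_mul _).mul (ih₂ x)).sub
      ((ih₁ x).const_mul _)).div_const _).congr_deriv ?_
    simp only [gegenbauerDeriv, id]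
    ring

lemma one_sub_sq_mul_gegenbauerDeriv (lam : ℝ) (n : ℕ) (x : ℝ) :
    (1 - x ^ 2) * gegenbauerDeriv lam (n + 1) x =
      -((n : ℝ) + 1) * x * gegenbauer lam (n + 1) x
        + ((n : ℝ) + 2 * lam) * gegenbauer lam n x := by
  induction n using Nat.twoStepInduction with
  | zero =>
    simp only [gegenbauer, gegenbauerDeriv]
    push_cast
    ring
  | one =>
    simp only [gegenbauer, gegenbauerDeriv]
    push_cast
    field_simp
    ring
  | more n ih₁ ih₂ =>
    have hD := gegenbauerDeriv_add_two lam (n + 1) x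
    have hC := gegenbauer_add_two lam (n + 1) x
    have hC' := gegenbauer_add_two lam n x
    push_cast at hD hC hC' ih₁ ih₂ ⊢
    refine mul_left_cancel₀ (show (n : ℝ) + 3 ≠ 0 by positivity) ?_
    linear_combination (1 - x ^ 2) * hD + 2 * ((n : ℝ) + 2 + lam) * x * ih₂
      - ((n : ℝ) + 1 + 2 * lam) * ih₁ + ((n : ℝ) + 3) * x * hC
      - ((n : ℝ) + 1 + 2 * lam) * hC'

lemma gegenbauer_succ_one (lam : ℝ) (n : ℕ) :
    ((n : ℝ) + 1) * gegenbauer lam (n + 1) 1 = ((n : ℝ) + 2 * lam) * gegenbauer lam n 1 := by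
  induction n with
  | zero => simp [gegenbauer]
  | succ n ih =>
    have h := gegenbauer_add_two lam n 1
    push_cast at ih ⊢
    linear_combination h + ih

lemma gegenbauer_one_pos {lam : ℝ} (hlam : 0 < lam) (n : ℕ) : 0 < gegenbauer lam n 1 := by
  induction n with
  | zero => simp [gegenbauer]
  | succ n ih =>
    have h := gegenbauer_succ_one lam n
    have : 0 < ((n : ℝ) + 1) * gegenbauer lam (n + 1) 1 := by rw [h]; positivity
    exact pos_of_mul_pos_right this (by positivity)

lemma integral_rpow_mul_one_sub_rpow {a b : ℝ} (ha : 0 < a) (hb : 0 < b) :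
    ∫ x in (0 : ℝ)..1, x ^ (a - 1) * (1 - x) ^ (b - 1) = Gamma a * Gamma b / Gamma (a + b) := by
  have h := Complex.betaIntegral_eq_Gamma_mul_div a b (by simpa using ha) (by simpa using hb)
  rw [Complex.betaIntegral, ← Complex.ofReal_add, Complex.Gamma_ofReal, Complex.Gamma_ofReal,
    Complex.Gamma_ofReal, ← Complex.ofReal_mul, ← Complex.ofReal_div] at h
  rw [← Complex.ofReal_inj, ← h, ← intervalIntegral.integral_ofReal]
  refine intervalIntegral.integral_congr fun x hx => ?_
  rw [uIcc_of_le zero_le_one] at hx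
  push_cast
  rw [Complex.ofReal_cpow hx.1, Complex.ofReal_cpow (sub_nonneg.2 hx.2)]
  push_cast
  ring

lemma integral_one_add_rpow_mul_one_sub_rpow {a b : ℝ} (ha : 0 < a) (hb : 0 < b) :
    ∫ x in (-1 : ℝ)..1, (1 + x) ^ (a - 1) * (1 - x) ^ (b - 1) =
      2 ^ (a + b - 1) * (Gamma a * Gamma b / Gamma (a + b)) := by
  have h := intervalIntegral.integral_comp_mul_add
    (fun x : ℝ => (1 + x) ^ (a - 1) * (1 - x) ^ (b - 1)) (two_ne_zero' ℝ) (-1) (a := 0) (b := 1)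
  have hscale : ∫ x in (0 : ℝ)..1, (2 * x) ^ (a - 1) * (1 - (2 * x + -1)) ^ (b - 1) =
      2 ^ (a - 1) * 2 ^ (b - 1) * ∫ x in (0 : ℝ)..1, x ^ (a - 1) * (1 - x) ^ (b - 1) := by
    rw [← intervalIntegral.integral_const_mul]
    refine intervalIntegral.integral_congr fun x hx => ?_
    rw [uIcc_of_le zero_le_one] at hx
    rw [show 1 - (2 * x + -1) = 2 * (1 - x) by ring, mul_rpow zero_le_two hx.1,
      mul_rpow zero_le_two (sub_nonneg.2 hx.2)]
    ring
  have hpow : (2 : ℝ) ^ (a + b - 1) = 2 * (2 ^ (a - 1) * 2 ^ (b - 1)) := by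
    rw [show a + b - 1 = 1 + (a - 1) + (b - 1) by ring, rpow_add two_pos, rpow_add two_pos,
      rpow_one, mul_assoc]
  norm_num at h
  rw [hscale, integral_rpow_mul_one_sub_rpow ha hb] at h
  rw [hpow]
  linarith

noncomputable def jacobiWeight (a b x : ℝ) : ℝ := (1 + x) ^ a * (1 - x) ^ b

noncomputable def gegenbauerMoment (lam a b : ℝ) (n : ℕ) : ℝ :=
  ∫ x in (-1 : ℝ)..1, jacobiWeight a b x * gegenbauer lam n x

section Moments

variable {lam a b : ℝ}

lemma jacobiWeight_add_one_right {x : ℝ} (hx : x ≤ 1) (hb : b + 1 ≠ 0) :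
    jacobiWeight a (b + 1) x = jacobiWeight a b x * (1 - x) := by
  rw [jacobiWeight, jacobiWeight, rpow_add_one' (by linarith) hb]
  ring

lemma intervalIntegrable_jacobiWeight_mul (ha : 0 ≤ a) (hb : 0 ≤ b) {g : ℝ → ℝ}
    (hg : Continuous g) :
    IntervalIntegrable (fun x => jacobiWeight a b x * g x) volume (-1) 1 :=
  Continuous.intervalIntegrable
    (by unfold jacobiWeight; fun_prop (disch := exact fun _ => Or.inr ‹_›)) _ _

lemma gegenbauerMoment_eq_zero_of_odd (a : ℝ) {n : ℕ} (hn : Odd n) :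
    gegenbauerMoment lam a a n = 0 := by
  have hodd (x : ℝ) : jacobiWeight a a (-x) * gegenbauer lam n (-x) =
      -(jacobiWeight a a x * gegenbauer lam n x) := by
    rw [jacobiWeight, jacobiWeight, gegenbauer_neg, hn.neg_one_pow, ← sub_eq_add_neg,
      sub_neg_eq_add]
    ring
  have h := intervalIntegral.integral_comp_neg (a := -1) (b := 1)
    fun x => jacobiWeight a a x * gegenbauer lam n x
  simp only [hodd, intervalIntegral.integral_neg, neg_neg] at h
  rw [gegenbauerMoment]
  linarith

lemma gegenbauerMoment_zero (hlam : 0 < lam) :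
    gegenbauerMoment lam lam (lam - 1) 0 = √π * Gamma lam / Gamma (lam + 1 / 2) := by
  have hbeta := integral_one_add_rpow_mul_one_sub_rpow (a := lam + 1) (b := lam)
    (by linarith) hlam
  rw [add_sub_cancel_right, show lam + 1 + lam - 1 = 2 * lam by ring,
    show lam + 1 + lam = 2 * lam + 1 by ring, Gamma_add_one hlam.ne',
    Gamma_add_one (by positivity)] at hbeta
  simp only [gegenbauerMoment, jacobiWeight, gegenbauer, mul_one, hbeta]
  have hdup := Gamma_mul_Gamma_add_half lam
  have hpow : (2 : ℝ) ^ (2 * lam) * 2 ^ (1 - 2 * lam) = 2 := by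
    rw [← rpow_add two_pos]
    norm_num
  have := (Gamma_pos_of_pos (by linarith : 0 < 2 * lam)).ne'
  rw [eq_div_iff (Gamma_pos_of_pos (by linarith)).ne']
  field_simp
  rw [show (2 * lam + 1) / 2 = lam + 1 / 2 by ring]
  linear_combination (2 : ℝ) ^ (2 * lam) * hdup + Gamma (2 * lam) * √π * hpow

lemma gegenbauerMoment_add_two (ha : 0 ≤ a) (hb : 0 ≤ b) (n : ℕ) :
    ((n : ℝ) + 2) * gegenbauerMoment lam a b (n + 2) =
      2 * ((n : ℝ) + 1 + lam) *
          (gegenbauerMoment lam a b (n + 1) - gegenbauerMoment lam a (b + 1) (n + 1))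
        - ((n : ℝ) + 2 * lam) * gegenbauerMoment lam a b n := by
  have hW (k : ℕ) := intervalIntegrable_jacobiWeight_mul ha hb (continuous_gegenbauer lam k)
  have hW' := intervalIntegrable_jacobiWeight_mul ha (by linarith : 0 ≤ b + 1)
    (continuous_gegenbauer lam (n + 1))
  have h : ∫ x in (-1 : ℝ)..1, ((n : ℝ) + 2) * (jacobiWeight a b x * gegenbauer lam (n + 2) x)
      = ∫ x in (-1 : ℝ)..1, (2 * ((n : ℝ) + 1 + lam) *
          (jacobiWeight a b x * gegenbauer lam (n + 1) x
            - jacobiWeight a (b + 1) x * gegenbauer lam (n + 1) x)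
          - ((n : ℝ) + 2 * lam) * (jacobiWeight a b x * gegenbauer lam n x)) := by
    refine intervalIntegral.integral_congr fun x hx => ?_
    rw [uIcc_of_le (by norm_num)] at hx
    rw [jacobiWeight_add_one_right hx.2 (by linarith)]
    linear_combination jacobiWeight a b x * gegenbauer_add_two lam n x
  rw [intervalIntegral.integral_const_mul, intervalIntegral.integral_sub
    (((hW _).sub hW').const_mul _) ((hW n).const_mul _), intervalIntegral.integral_const_mul,
    intervalIntegral.integral_const_mul, intervalIntegral.integral_sub (hW _) hW'] at h
  exact h

lemma hasDerivAt_jacobiWeight_mul_gegenbauer (hlam : 1 ≤ lam) (n : ℕ) {x : ℝ}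
    (hx : x ∈ Icc (-1 : ℝ) 1) :
    HasDerivAt (fun y => jacobiWeight (lam + 1) lam y * gegenbauer lam (n + 1) y)
      (((n : ℝ) + 2 * lam) * (jacobiWeight lam (lam - 1) x * gegenbauer lam n x)
        - ((n : ℝ) + 1 + 2 * lam) * (jacobiWeight lam (lam - 1) x * gegenbauer lam (n + 1) x)
        + ((n : ℝ) + 2 * lam + 2) * (jacobiWeight lam lam x * gegenbauer lam (n + 1) x)) x := by
  have hu : HasDerivAt (fun y : ℝ => (1 + y) ^ (lam + 1)) ((lam + 1) * (1 + x) ^ lam) x := by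
    simpa using ((hasDerivAt_id x).const_add 1).rpow_const (p := lam + 1) (Or.inr (by linarith))
  have hv : HasDerivAt (fun y : ℝ => (1 - y) ^ lam) (-(lam * (1 - x) ^ (lam - 1))) x := by
    simpa using ((hasDerivAt_id x).const_sub 1).rpow_const (p := lam) (Or.inr hlam)
  refine ((hu.fun_mul hv).fun_mul (hasDerivAt_gegenbauer lam (n + 1) x)).congr_deriv ?_
  have h₁ : (1 + x) ^ (lam + 1) = (1 + x) ^ lam * (1 + x) :=
    rpow_add_one' (by linarith [hx.1]) (by linarith)
  have h₂ : (1 - x) ^ lam = (1 - x) ^ (lam - 1) * (1 - x) := by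
    rw [← rpow_add_one' (by linarith [hx.2]) (by linarith), sub_add_cancel]
  simp only [jacobiWeight]
  rw [h₁, h₂]
  linear_combination (1 + x) ^ lam * (1 - x) ^ (lam - 1) * one_sub_sq_mul_gegenbauerDeriv lam n x

lemma gegenbauerMoment_succ (hlam : 1 ≤ lam) (n : ℕ) :
    ((n : ℝ) + 1 + 2 * lam) * gegenbauerMoment lam lam (lam - 1) (n + 1) =
      ((n : ℝ) + 2 * lam) * gegenbauerMoment lam lam (lam - 1) n
        + ((n : ℝ) + 2 * lam + 2) * gegenbauerMoment lam lam lam (n + 1) := by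
  have hW (k : ℕ) := intervalIntegrable_jacobiWeight_mul (by linarith : 0 ≤ lam)
    (by linarith : 0 ≤ lam - 1) (continuous_gegenbauer lam k)
  have hW' := intervalIntegrable_jacobiWeight_mul (by linarith : 0 ≤ lam)
    (by linarith : 0 ≤ lam) (continuous_gegenbauer lam (n + 1))
  have h := intervalIntegral.integral_eq_sub_of_hasDerivAt
    (fun x hx => hasDerivAt_jacobiWeight_mul_gegenbauer hlam n
      (uIcc_of_le (by norm_num : (-1 : ℝ) ≤ 1) ▸ hx))
    ((((hW n).const_mul _).sub ((hW (n + 1)).const_mul _)).add (hW'.const_mul _))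
  rw [intervalIntegral.integral_add (((hW n).const_mul _).sub ((hW (n + 1)).const_mul _))
      (hW'.const_mul _),
    intervalIntegral.integral_sub ((hW n).const_mul _) ((hW (n + 1)).const_mul _),
    intervalIntegral.integral_const_mul, intervalIntegral.integral_const_mul,
    intervalIntegral.integral_const_mul] at h
  have hboundary : jacobiWeight (lam + 1) lam 1 * gegenbauer lam (n + 1) 1
      - jacobiWeight (lam + 1) lam (-1) * gegenbauer lam (n + 1) (-1) = 0 := by
    norm_num [jacobiWeight, zero_rpow (by linarith : lam ≠ 0),
      zero_rpow (by linarith : lam + 1 ≠ 0)]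
  rw [hboundary] at h
  simp only [gegenbauerMoment]
  linarith

lemma gegenbauerMoment_even_succ (hlam : 1 ≤ lam) (m : ℕ) :
    (2 * (m : ℝ) + 1 + 2 * lam) * gegenbauerMoment lam lam (lam - 1) (2 * m + 1) =
      (2 * (m : ℝ) + 2 * lam) * gegenbauerMoment lam lam (lam - 1) (2 * m) := by
  have h := gegenbauerMoment_succ hlam (2 * m)
  rw [gegenbauerMoment_eq_zero_of_odd lam (odd_two_mul_add_one m)] at h
  push_cast at h
  linarith

lemma gegenbauerMoment_odd_succ (hlam : 1 ≤ lam) (m : ℕ) :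
    (2 * (m : ℝ) + 2) * gegenbauerMoment lam lam (lam - 1) (2 * m + 2) =
      (2 * (m : ℝ) + 1) * gegenbauerMoment lam lam (lam - 1) (2 * m + 1) := by
  have h := gegenbauerMoment_add_two (lam := lam) (by linarith : 0 ≤ lam)
    (by linarith : 0 ≤ lam - 1) (2 * m)
  rw [sub_add_cancel, gegenbauerMoment_eq_zero_of_odd lam (odd_two_mul_add_one m)] at h
  push_cast at h
  linear_combination h + gegenbauerMoment_even_succ hlam m

lemma gegenbauerMoment_odd (hlam : 1 ≤ lam) (k : ℕ) :
    gegenbauerMoment lam lam (lam - 1) (2 * k + 1) =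
      gegenbauer lam (2 * k + 1) 1 *
        (Gamma (k + 1 / 2) * Gamma (k + 3 / 2) * Gamma lam * Gamma (lam + 1 / 2)) /
        (√π * Gamma (k + lam + 1 / 2) * Gamma (k + lam + 3 / 2)) := by
  induction k with
  | zero =>
    have h := gegenbauerMoment_even_succ hlam 0
    rw [gegenbauerMoment_zero (by linarith)] at h
    have hG : Gamma (3 / 2 : ℝ) = √π / 2 := by
      rw [show (3 / 2 : ℝ) = 1 / 2 + 1 by norm_num, Gamma_add_one (by norm_num),
        Gamma_one_half_eq]
      ring
    have hGl : Gamma (lam + 3 / 2) = (lam + 1 / 2) * Gamma (lam + 1 / 2) := by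
      rw [show lam + 3 / 2 = (lam + 1 / 2) + 1 by ring, Gamma_add_one (by linarith)]
    have := (Gamma_pos_of_pos (by linarith : 0 < lam + 1 / 2)).ne'
    have := (Gamma_pos_of_pos (by linarith : 0 < lam)).ne'
    have hpi : √π ≠ 0 := by positivity
    simp only [mul_zero, zero_add, CharP.cast_eq_zero, gegenbauer, Gamma_one_half_eq, hG, hGl]
      at h ⊢
    field_simp at h ⊢
    linear_combination h
  | succ k ih =>
    have hM₁ := gegenbauerMoment_odd_succ hlam k
    have hM₂ := gegenbauerMoment_even_succ hlam (k + 1)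
    have hC₁ := gegenbauer_succ_one lam (2 * k + 1)
    have hC₂ := gegenbauer_succ_one lam (2 * k + 2)
    rw [show 2 * (k + 1) = 2 * k + 2 by ring] at hM₂ ⊢
    push_cast at hM₁ hM₂ hC₁ hC₂ ⊢
    rw [show (k : ℝ) + 1 + 1 / 2 = (k + 1 / 2) + 1 by ring,
      show (k : ℝ) + 1 + 3 / 2 = (k + 3 / 2) + 1 by ring,
      show (k : ℝ) + 1 + lam + 1 / 2 = (k + lam + 1 / 2) + 1 by ring,
      show (k : ℝ) + 1 + lam + 3 / 2 = (k + lam + 3 / 2) + 1 by ring,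
      Gamma_add_one (by positivity), Gamma_add_one (by positivity),
      Gamma_add_one (by positivity), Gamma_add_one (by positivity)]
    rw [ih] at hM₁
    rw [show 2 * k + 1 + 1 = 2 * k + 2 from rfl] at hC₁
    have := (Gamma_pos_of_pos (by positivity : 0 < (k : ℝ) + lam + 1 / 2)).ne'
    have := (Gamma_pos_of_pos (by positivity : 0 < (k : ℝ) + lam + 3 / 2)).ne'
    have solve {a b c : ℝ} (h : c * a = b) (hc : 0 < c) : a = b / c :=
      eq_div_of_mul_eq hc.ne' (by rw [mul_comm, h])
    rw [solve hM₂ (by positivity), solve hM₁ (by positivity), solve hC₂ (by positivity),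
      solve hC₁ (by positivity)]
    field_simp
    ring

end Moments

lemma cot_arccos_div_two {x : ℝ} (hx₁ : -1 ≤ x) (hx₂ : x ≤ 1) :
    cot (arccos x / 2) = √(1 + x) / √(1 - x) := by
  have hcos : cos (arccos x) = x := cos_arccos hx₁ hx₂
  rw [cot_eq_cos_div_sin, cos_half (by linarith [arccos_nonneg x, pi_pos]) (arccos_le_pi x),
    sin_half_eq_sqrt (arccos_nonneg x) (by linarith [arccos_le_pi x, pi_pos]), hcos,
    sqrt_div' _ zero_le_two, sqrt_div' _ zero_le_two, div_div_div_cancel_right₀ (by positivity)]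

lemma integral_cot_arccos_mul_gegenbauer (lam : ℝ) (n : ℕ) :
    ∫ x in (-1 : ℝ)..1, cot (arccos x / 2) * gegenbauer lam n x * (1 - x ^ 2) ^ (lam - 1 / 2) =
      gegenbauerMoment lam lam (lam - 1) n := by
  refine intervalIntegral.integral_congr_Ioo_of_le (by norm_num) fun x hx => ?_
  have hu : 0 < 1 + x := by linarith [hx.1]
  have hv : 0 < 1 - x := by linarith [hx.2]
  rw [jacobiWeight, cot_arccos_div_two hx.1.le hx.2.le, sqrt_eq_rpow, sqrt_eq_rpow,
    show 1 - x ^ 2 = (1 + x) * (1 - x) by ring, mul_rpow hu.le hv.le]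
  have hu' : (1 + x) ^ lam = (1 + x) ^ (1 / 2 : ℝ) * (1 + x) ^ (lam - 1 / 2) := by
    rw [← rpow_add hu]; ring_nf
  have hv' : (1 - x) ^ (lam - 1 / 2) = (1 - x) ^ (1 / 2 : ℝ) * (1 - x) ^ (lam - 1) := by
    rw [← rpow_add hv]; ring_nf
  rw [hu', hv']
  field_simp

lemma sphereArea_div_sphereArea_sub_one {q : ℝ} (hq : 0 < q) :
    sphereArea q / sphereArea (q - 1) = √π * Gamma (q / 2) / Gamma ((q + 1) / 2) := by
  have := (Gamma_pos_of_pos (by positivity : 0 < q / 2)).ne'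
  have := (Gamma_pos_of_pos (by positivity : 0 < (q + 1) / 2)).ne'
  have hpow : π ^ ((q + 1) / 2) = √π * π ^ (q / 2) := by
    rw [sqrt_eq_rpow, ← rpow_add pi_pos]
    ring_nf
  rw [sphereArea, sphereArea, sub_add_cancel, hpow]
  field_simp

/-- Odd-order Gegenbauer coefficients of the stereographic kernel cot. -/
theorem gegenbauer_coeff_cot_odd (q : ℕ) (hq : 3 ≤ q) (k : ℕ) :
    (sphereArea (q : ℝ) / sphereArea ((q : ℝ) - 1) *
        (1 + 2 * ((2 * k + 1 : ℕ) : ℝ) / ((q : ℝ) - 1))⁻¹ *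
        gegenbauer (((q : ℝ) - 1) / 2) (2 * k + 1) 1)⁻¹ *
      ∫ x in (-1 : ℝ)..1,
        Real.cot (Real.arccos x / 2) * gegenbauer (((q : ℝ) - 1) / 2) (2 * k + 1) x *
          (1 - x ^ 2) ^ ((q : ℝ) / 2 - 1) =
    Real.Gamma ((k : ℝ) + 1 / 2) ^ 2 * Real.Gamma (((q : ℝ) - 1) / 2) ^ 2 /
        (2 * Real.pi * Real.Gamma ((k : ℝ) + (q : ℝ) / 2) ^ 2) *
      ((2 * (k : ℝ) + 1) * (4 * (k : ℝ) + (q : ℝ) + 1) / (2 * (k : ℝ) + (q : ℝ))) := by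
  have hq' : (3 : ℝ) ≤ q := by exact_mod_cast hq
  set lam := ((q : ℝ) - 1) / 2 with hlam
  have hlam₁ : 1 ≤ lam := by rw [hlam]; linarith
  have hq_eq : (q : ℝ) = 2 * lam + 1 := by rw [hlam]; ring
  rw [show (q : ℝ) / 2 - 1 = lam - 1 / 2 by rw [hq_eq]; ring, integral_cot_arccos_mul_gegenbauer,
    gegenbauerMoment_odd hlam₁ k, sphereArea_div_sphereArea_sub_one (by positivity),
    hq_eq, show (k : ℝ) + (2 * lam + 1) / 2 = k + lam + 1 / 2 by ring,
    show (2 * lam + 1) / 2 = lam + 1 / 2 by ring, show (2 * lam + 1 + 1) / 2 = lam + 1 by ring,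
    show (k : ℝ) + 3 / 2 = k + 1 / 2 + 1 by ring,
    show (k : ℝ) + lam + 3 / 2 = k + lam + 1 / 2 + 1 by ring,
    Gamma_add_one (by positivity), Gamma_add_one (by positivity), Gamma_add_one (by positivity)]
  have := (gegenbauer_one_pos (lam := lam) (by positivity) (2 * k + 1)).ne'
  have := (Gamma_pos_of_pos (by positivity : 0 < lam)).ne'
  have := (Gamma_pos_of_pos (by positivity : 0 < lam + 1 / 2)).ne'
  have := (Gamma_pos_of_pos (by positivity : 0 < (k : ℝ) + 1 / 2)).ne'
  have := (Gamma_pos_of_pos (by positivity : 0 < (k : ℝ) + lam + 1 / 2)).ne'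
  have hpi := sq_sqrt pi_pos.le
  push_cast
  field_simp
  rw [hpi]
  ring
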